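/- Let p be a prime with p ≡ 3 (mod 4). Then every codeword c_S of the LQR code C with S ⊆ GF(p) non-empty and S ≠ GF(p) has Hamming weight exactly 2p; i.e., C is a constant-weight code of weight 2p (apart from the zero word). Moreover, the minimum distance of C is at least d_p = 4p − 2·max_{∅≠S⊆GF(p)} |X_S(GF(p))|. -/

import Mathlib

open Finset

/-- `r_S = Σ_{i∈S} x^i`, viewed as an element of `R = GF(2)[x]/(x^p-1)`
(identified with functions `ZMod p → ZMod 2` recording coefficients). -/
def rOf {p : ℕ} (S : Finset (ZMod p)) : ZMod p → ZMod 2 :=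
  fun a => if a ∈ S then 1 else 0

/-- Multiplication in `R = GF(2)[x]/(x^p-1)` (cyclic convolution of coefficients). -/
def conv {p : ℕ} [NeZero p] (f g : ZMod p → ZMod 2) : ZMod p → ZMod 2 :=
  fun a => ∑ b : ZMod p, f b * g (a - b)

/-- Hamming weight of an element of `R`. -/
def wt {p : ℕ} [NeZero p] (f : ZMod p → ZMod 2) : ℕ :=
  (Finset.univ.filter fun a => f a ≠ 0).card

/-- The set `Q` of quadratic residues in `GF(p)ˣ`. -/
def Qset (p : ℕ) [NeZero p] : Finset (ZMod p) :=
  Finset.univ.filter fun a => a ≠ 0 ∧ ∃ b : ZMod p, b ^ 2 = a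

/-- The set `N` of quadratic non-residues in `GF(p)ˣ`. -/
def Nset (p : ℕ) [NeZero p] : Finset (ZMod p) :=
  Finset.univ.filter fun a => a ≠ 0 ∧ ¬∃ b : ZMod p, b ^ 2 = a

/-- The character sum `Σ_{a ∈ GF(p)} χ(f_S(a))` where `f_S(x) = Π_{b∈S}(x-b)` and
`χ` is the Legendre character. -/
def charSum (p : ℕ) [Fact p.Prime] (S : Finset (ZMod p)) : ℤ :=
  ∑ a : ZMod p, quadraticChar (ZMod p) (∏ b ∈ S, (a - b))

/-- `|X_S(GF(p))|`: the number of affine points of `y² = f_S(x)` over `GF(p)`,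
plus `2` points at infinity if `|S|` is even and `1` if `|S|` is odd. -/
noncomputable def Xcard (p : ℕ) (S : Finset (ZMod p)) : ℕ :=
  Nat.card {xy : ZMod p × ZMod p // xy.2 ^ 2 = ∏ b ∈ S, (xy.1 - b)} +
    if Even S.card then 2 else 1

/-- The QQR codeword `(r_N r_S, r_Q r_S)`. -/
def qqr (p : ℕ) [NeZero p] (S : Finset (ZMod p)) :
    (ZMod p → ZMod 2) × (ZMod p → ZMod 2) :=
  (conv (rOf (Nset p)) (rOf S), conv (rOf (Qset p)) (rOf S))

/-- Hamming weight of a length-`2p` vector identified with a pair of elements of `R`. -/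
def wt2 {p : ℕ} [NeZero p] (x : (ZMod p → ZMod 2) × (ZMod p → ZMod 2)) : ℕ :=
  wt x.1 + wt x.2

/-- The LQR codeword `c_S = (r_N r_S, r_Q r_S, r_N r_S*, r_Q r_S*)`. -/
def lqr (p : ℕ) [NeZero p] (S : Finset (ZMod p)) :
    ((ZMod p → ZMod 2) × (ZMod p → ZMod 2)) × ((ZMod p → ZMod 2) × (ZMod p → ZMod 2)) :=
  (qqr p S, qqr p Sᶜ)

/-- Hamming weight of a length-`4p` vector identified with a 4-tuple of elements of `R`. -/
def wt4 {p : ℕ} [NeZero p]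
    (x : ((ZMod p → ZMod 2) × (ZMod p → ZMod 2)) × ((ZMod p → ZMod 2) × (ZMod p → ZMod 2))) : ℕ :=
  wt2 x.1 + wt2 x.2

/-!
Since `|Q| = |N| = (p - 1) / 2` is odd, `r_T r_{Sᶜ} = r_T r_S + (1, …, 1)` for `T = Q, N`, so
the halves `q_S = (r_N r_S, r_Q r_S)` and `q_{Sᶜ}` of `c_S` have weights adding up to `2p`. The
code is additive: `c_{S₁} - c_{S₂} = (q_D, q_D)` with `D = S₁ ∆ S₂`.

Counting `#{b ∈ D | a - b ∈ N}` and `#{b ∈ D | a - b ∈ Q}` modulo 2 gives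
`wt q_D = p - Σ_a χ(f_D(a)) = 2p + 2 - |X_D|` when `|D|` is even. When `|D|` is odd,
`wt q_D = 2p - wt q_E` with `E = Dᶜ` of even size; the substitution `x = t - Δ / u` moves a root
`t ∈ E` to infinity and turns `y² = f_E(x)` into a curve `y² = f_S(u)` of odd degree `|E| - 1`
with `Σ χ(f_S) = -1 - Σ χ(f_E)` (here `χ(-1) = -1` is used), so that `wt q_D = 2p - |X_S|`.
-/

section CharacterSums

variable {F : Type*} [Field F]

theorem prod_mul_sub_eq_pow_mul_prod {E : Finset F} {t u : F} (hu : u ≠ 0) (Δ : F) :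
    ∏ b ∈ E, (u * (t - b) - Δ) = u ^ #E * ∏ b ∈ E, (t - Δ / u - b) := by
  rw [← prod_const, ← prod_mul_distrib]
  refine prod_congr rfl fun b _ => ?_
  field_simp
  ring

variable [DecidableEq F]

theorem prod_erase_sub_ne_zero (E : Finset F) (t : F) : ∏ c ∈ E.erase t, (t - c) ≠ 0 :=
  prod_ne_zero_iff.mpr fun _ hc => sub_ne_zero.mpr (ne_of_mem_erase hc).symm

theorem injOn_div_sub {Δ : F} (hΔ : Δ ≠ 0) (E : Finset F) (t : F) :
    Set.InjOn (fun b => Δ / (t - b)) (E.erase t) := by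
  intro b hb c hc h
  have hb' := sub_ne_zero.mpr (ne_of_mem_erase hb).symm
  have hc' := sub_ne_zero.mpr (ne_of_mem_erase hc).symm
  exact (sub_right_injective (mul_left_cancel₀ hΔ ((div_eq_div_iff hb' hc').mp h))).symm

/-- The roots of the odd-degree model of `y² = ∏_{b ∈ E} (x - b)` under `x = t - Δ / u`,
`Δ = ∏_{b ∈ E, b ≠ t} (t - b)`, which sends the root `t` to infinity. -/
def inversionRoots (E : Finset F) (t : F) : Finset F :=
  (E.erase t).image fun b => (∏ c ∈ E.erase t, (t - c)) / (t - b)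

theorem card_inversionRoots {E : Finset F} {t : F} (ht : t ∈ E) :
    #(inversionRoots E t) = #E - 1 := by
  rw [inversionRoots, card_image_of_injOn (injOn_div_sub (prod_erase_sub_ne_zero E t) E t),
    card_erase_of_mem ht]

theorem prod_mul_sub_eq_neg_sq_mul_prod_inversionRoots {E : Finset F} {t : F} (ht : t ∈ E)
    (u : F) :
    ∏ b ∈ E, (u * (t - b) - ∏ c ∈ E.erase t, (t - c)) =
      -(∏ c ∈ E.erase t, (t - c)) ^ 2 * ∏ b ∈ inversionRoots E t, (u - b) := by
  set Δ := ∏ c ∈ E.erase t, (t - c)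
  have hΔ : Δ ≠ 0 := prod_erase_sub_ne_zero E t
  have factor : ∀ b ∈ E.erase t, u * (t - b) - Δ = (t - b) * (u - Δ / (t - b)) := by
    intro b hb
    have : t - b ≠ 0 := sub_ne_zero.mpr (ne_of_mem_erase hb).symm
    field_simp
  rw [← mul_prod_erase E _ ht, prod_congr rfl factor, prod_mul_distrib,
    inversionRoots, prod_image (injOn_div_sub hΔ E t)]
  ring

variable [Fintype F]

theorem natCard_sq_eq_card_add_sum_quadraticChar (hF : ringChar F ≠ 2) (g : F → F) :
    (Nat.card {xy : F × F // xy.2 ^ 2 = g xy.1} : ℤ) =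
      Fintype.card F + ∑ x, quadraticChar F (g x) := by
  have fiber (x : F) : (Fintype.card {y // y ^ 2 = g x} : ℤ) = quadraticChar F (g x) + 1 := by
    rw [← quadraticChar_card_sqrts hF, Fintype.card_subtype, Set.toFinset_ofPred]
  rw [Nat.card_eq_fintype_card,
    Fintype.card_congr (Equiv.subtypeProdEquivSigmaSubtype fun x y => y ^ 2 = g x),
    Fintype.card_sigma, Nat.cast_sum]
  simp only [fiber, sum_add_distrib, sum_const, card_univ, nsmul_one]
  ring

theorem sum_quadraticChar_prod_add_sum_inversionRoots (hF : quadraticChar F (-1) = -1)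
    {E : Finset F} (hE : Even #E) {t : F} (ht : t ∈ E) :
    ∑ a, quadraticChar F (∏ b ∈ E, (a - b)) +
      ∑ u, quadraticChar F (∏ b ∈ inversionRoots E t, (u - b)) = -1 := by
  set χ := quadraticChar F
  set Δ := ∏ c ∈ E.erase t, (t - c)
  have hΔ : Δ ≠ 0 := prod_erase_sub_ne_zero E t
  have even_pow (x : F) (hx : x ≠ 0) : χ x ^ #E = 1 := by
    obtain ⟨m, hm⟩ := hE.two_dvd
    rw [hm, pow_mul, quadraticChar_sq_one hx, one_pow]
  have model (u : F) :
      χ (∏ b ∈ inversionRoots E t, (u - b)) = -χ (∏ b ∈ E, (u * (t - b) - Δ)) := by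
    have hneg : χ (-Δ ^ 2) = -1 := by
      rw [neg_eq_neg_one_mul, map_mul, hF, quadraticChar_sq_one' hΔ, mul_one]
    rw [prod_mul_sub_eq_neg_sq_mul_prod_inversionRoots ht, map_mul, hneg, neg_one_mul, neg_neg]
  -- `t - Δ / 0 = t` is a root of `∏ (x - b)`, which accounts for the point `u = 0`.
  have shift (u : F) : χ (∏ b ∈ E, (u * (t - b) - Δ)) =
      χ (∏ b ∈ E, (t - Δ / u - b)) + if u = 0 then 1 else 0 := by
    rcases eq_or_ne u 0 with rfl | hu
    · simp only [zero_mul, zero_sub, prod_const, map_pow, div_zero, sub_zero,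
        prod_eq_zero ht (sub_self t), MulChar.map_zero, if_pos, zero_add]
      exact even_pow _ (neg_ne_zero.mpr hΔ)
    · rw [prod_mul_sub_eq_pow_mul_prod hu, map_mul, map_pow, even_pow u hu, one_mul, if_neg hu,
        add_zero]
  have bij : Function.Bijective fun u : F => t - Δ / u := by
    refine Finite.injective_iff_bijective.mp fun u v h => inv_injective ?_
    exact mul_left_cancel₀ hΔ (by simpa [div_eq_mul_inv] using h)
  simp only [model, shift, sum_neg_distrib, sum_add_distrib, sum_ite_eq',
    mem_univ, if_true, bij.sum_comp fun a => χ (∏ b ∈ E, (a - b))]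
  ring

end CharacterSums

section Residues

variable {p : ℕ} [Fact p.Prime]

theorem mem_Qset_iff {a : ZMod p} : a ∈ Qset p ↔ quadraticChar (ZMod p) a = 1 := by
  rcases eq_or_ne a 0 with rfl | ha
  · simp [Qset]
  · simp only [Qset, mem_filter, mem_univ, true_and, ne_eq, ha, not_false_eq_true,
      quadraticChar_one_iff_isSquare ha, isSquare_iff_exists_sq, eq_comm]

theorem mem_Nset_iff {a : ZMod p} : a ∈ Nset p ↔ quadraticChar (ZMod p) a = -1 := by
  rcases eq_or_ne a 0 with rfl | ha
  · simp [Nset]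
  · rw [quadraticChar_neg_one_iff_not_isSquare, isSquare_iff_exists_sq]
    simp only [Nset, mem_filter, mem_univ, true_and, ne_eq, ha, not_false_eq_true, eq_comm]

theorem ite_mem_Qset_add_ite_mem_Nset_add_ite_eq_zero (a : ZMod p) :
    ((if a ∈ Qset p then 1 else 0) + (if a ∈ Nset p then 1 else 0) +
      if a = 0 then 1 else 0 : ℕ) = 1 := by
  rcases eq_or_ne a 0 with rfl | ha
  · simp [mem_Qset_iff, mem_Nset_iff]
  · rcases quadraticChar_dichotomy ha with h | h <;> simp [mem_Qset_iff, mem_Nset_iff, h, ha]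

theorem card_Qset_add_card_Nset : #(Qset p) + #(Nset p) + 1 = p := by
  have h := sum_congr rfl fun (a : ZMod p) (_ : a ∈ univ) =>
    ite_mem_Qset_add_ite_mem_Nset_add_ite_eq_zero a
  simpa [sum_add_distrib, sum_ite_mem] using h

theorem card_Qset_eq_card_Nset (hp : p ≠ 2) : #(Qset p) = #(Nset p) := by
  have hχ (a : ZMod p) : quadraticChar (ZMod p) a =
      (if a ∈ Qset p then 1 else 0) - if a ∈ Nset p then 1 else 0 := by
    rcases eq_or_ne a 0 with rfl | ha
    · simp [mem_Qset_iff, mem_Nset_iff]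
    · rcases quadraticChar_dichotomy ha with h | h <;> simp [mem_Qset_iff, mem_Nset_iff, h]
  have hsum := quadraticChar_sum_zero (F := ZMod p) (by rwa [ZMod.ringChar_zmod_n])
  simp only [hχ, sum_sub_distrib, sum_ite_mem, univ_inter,
    sum_const, nsmul_one, sub_eq_zero] at hsum
  exact_mod_cast hsum

theorem quadraticChar_zmod_neg_one (hp4 : p % 4 = 3) : quadraticChar (ZMod p) (-1) = -1 :=
  quadraticChar_neg_one_iff_not_isSquare.mpr <| by
    rw [FiniteField.isSquare_neg_one_iff, ZMod.card]; omega

end Residues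

open scoped symmDiff

section Weights

variable {p : ℕ}

theorem rOf_symmDiff (S₁ S₂ : Finset (ZMod p)) : rOf (S₁ ∆ S₂) = rOf S₁ - rOf S₂ := by
  funext a
  by_cases h₁ : a ∈ S₁ <;> by_cases h₂ : a ∈ S₂ <;> simp [rOf, mem_symmDiff, h₁, h₂]

variable [NeZero p]

theorem rOf_compl (S : Finset (ZMod p)) : rOf Sᶜ = rOf S + 1 := by
  funext a
  by_cases h : a ∈ S <;> simp [rOf, h]
  decide

theorem conv_sub_right (f g h : ZMod p → ZMod 2) : conv f (g - h) = conv f g - conv f h := by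
  funext a
  simp [conv, mul_sub, sum_sub_distrib]

theorem conv_rOf_add_one {T : Finset (ZMod p)} (hT : Odd #T) (g : ZMod p → ZMod 2) :
    conv (rOf T) (g + 1) = conv (rOf T) g + 1 := by
  funext a
  simp [conv, rOf, mul_add, sum_add_distrib, ZMod.natCast_eq_one_iff_odd.mpr hT]

theorem conv_rOf_rOf_apply (T S : Finset (ZMod p)) (a : ZMod p) :
    conv (rOf T) (rOf S) a = #{b ∈ S | a - b ∈ T} := by
  rw [conv, ← (Equiv.subLeft a).sum_comp]
  simp only [Equiv.subLeft_apply, sub_sub_cancel, rOf, mul_ite, mul_one, mul_zero]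
  rw [← sum_filter, ← sum_filter]
  simp

theorem wt_add_wt_add_one (f : ZMod p → ZMod 2) : wt f + wt (f + 1) = p := by
  have flip : ∀ x : ZMod 2, x + 1 ≠ 0 ↔ ¬x ≠ 0 := by decide
  simp only [wt, Pi.add_apply, Pi.one_apply, flip]
  rw [card_filter_add_card_filter_not, card_univ, ZMod.card]

theorem wt_eq_sum_val (f : ZMod p → ZMod 2) : wt f = ∑ a, (f a).val := by
  rw [wt, card_filter]
  refine sum_congr rfl fun a _ => ?_
  generalize f a = x
  fin_cases x <;> rfl

theorem wt2_add_wt2_add_one (x : (ZMod p → ZMod 2) × (ZMod p → ZMod 2)) :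
    wt2 x + wt2 (x + 1) = 2 * p := by
  have h₁ := wt_add_wt_add_one x.1
  have h₂ := wt_add_wt_add_one x.2
  simp only [wt2, Prod.fst_add, Prod.snd_add, Prod.fst_one, Prod.snd_one]
  omega

theorem wt2_zero : wt2 (0 : (ZMod p → ZMod 2) × (ZMod p → ZMod 2)) = 0 := by
  simp [wt2, wt]

theorem qqr_sub (S₁ S₂ : Finset (ZMod p)) :
    qqr p S₁ - qqr p S₂ = qqr p (S₁ ∆ S₂) := by
  simp [qqr, rOf_symmDiff, conv_sub_right]

theorem lqr_sub (S₁ S₂ : Finset (ZMod p)) :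
    lqr p S₁ - lqr p S₂ = (qqr p (S₁ ∆ S₂), qqr p (S₁ ∆ S₂)) := by
  rw [lqr, lqr, Prod.mk_sub_mk, qqr_sub, qqr_sub, compl_symmDiff_compl]

theorem qqr_empty : qqr p ∅ = 0 := by
  ext <;> simp [qqr, conv, rOf]

theorem Xcard_le_sSup {S : Finset (ZMod p)} (hS : S.Nonempty) :
    Xcard p S ≤ sSup {m : ℕ | ∃ S : Finset (ZMod p), S.Nonempty ∧ Xcard p S = m} := by
  refine le_csSup ⟨Nat.card (ZMod p × ZMod p) + 2, ?_⟩ ⟨S, hS, rfl⟩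
  rintro _ ⟨T, -, rfl⟩
  have := Finite.card_subtype_le fun xy : ZMod p × ZMod p => xy.2 ^ 2 = ∏ b ∈ T, (xy.1 - b)
  rw [Xcard]
  split_ifs <;> omega

end Weights

section WeightFormulas

variable {p : ℕ} [Fact p.Prime]

theorem odd_card_Qset_and_odd_card_Nset (hp4 : p % 4 = 3) :
    Odd #(Qset p) ∧ Odd #(Nset p) := by
  have hsum := card_Qset_add_card_Nset (p := p)
  have heq := card_Qset_eq_card_Nset (p := p) (by omega)
  constructor <;> rw [Nat.odd_iff] <;> omega

theorem qqr_compl (hp4 : p % 4 = 3) (S : Finset (ZMod p)) : qqr p Sᶜ = qqr p S + 1 := by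
  obtain ⟨hQ, hN⟩ := odd_card_Qset_and_odd_card_Nset hp4
  rw [qqr, qqr, rOf_compl, conv_rOf_add_one hN, conv_rOf_add_one hQ]
  rfl

theorem wt2_qqr_add_wt2_qqr_compl (hp4 : p % 4 = 3) (S : Finset (ZMod p)) :
    wt2 (qqr p S) + wt2 (qqr p Sᶜ) = 2 * p := by
  rw [qqr_compl hp4, wt2_add_wt2_add_one]

theorem card_filter_sub_mem_Qset_add_card_filter_sub_mem_Nset (S : Finset (ZMod p))
    (a : ZMod p) :
    #{b ∈ S | a - b ∈ Qset p} + #{b ∈ S | a - b ∈ Nset p} + (if a ∈ S then 1 else 0) =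
      #S := by
  calc _ = ∑ b ∈ S, ((if a - b ∈ Qset p then 1 else 0) + (if a - b ∈ Nset p then 1 else 0) +
        if a - b = 0 then 1 else 0) := by
        simp only [card_filter, sum_add_distrib, sub_eq_zero, sum_ite_eq]
    _ = #S := by
        rw [card_eq_sum_ones]
        exact sum_congr rfl fun b _ => ite_mem_Qset_add_ite_mem_Nset_add_ite_eq_zero (a - b)

theorem quadraticChar_prod_sub_of_notMem {S : Finset (ZMod p)} {a : ZMod p} (ha : a ∉ S) :
    quadraticChar (ZMod p) (∏ b ∈ S, (a - b)) = (-1) ^ #{b ∈ S | a - b ∈ Nset p} := by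
  rw [map_prod, card_filter, ← prod_pow_eq_pow_sum]
  refine prod_congr rfl fun b hb => ?_
  have hab : a - b ≠ 0 := sub_ne_zero.mpr (ne_of_mem_of_not_mem hb ha).symm
  rcases quadraticChar_dichotomy hab with h | h <;> simp [mem_Nset_iff, h]

theorem val_conv_Nset_add_val_conv_Qset {S : Finset (ZMod p)} (hS : Even #S) (a : ZMod p) :
    ((conv (rOf (Nset p)) (rOf S) a).val + (conv (rOf (Qset p)) (rOf S) a).val : ℤ) =
      1 - quadraticChar (ZMod p) (∏ b ∈ S, (a - b)) := by
  have hpart := card_filter_sub_mem_Qset_add_card_filter_sub_mem_Nset S a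
  rw [Nat.even_iff] at hS
  rw [conv_rOf_rOf_apply, conv_rOf_rOf_apply, ZMod.val_natCast, ZMod.val_natCast]
  by_cases ha : a ∈ S
  · rw [prod_eq_zero ha (sub_self a), MulChar.map_zero, if_pos ha] at *
    omega
  · rw [quadraticChar_prod_sub_of_notMem ha, if_neg ha] at *
    rcases Nat.even_or_odd #{b ∈ S | a - b ∈ Nset p} with hn | hn
    · rw [hn.neg_one_pow]
      rw [Nat.even_iff] at hn
      omega
    · rw [hn.neg_one_pow]
      rw [Nat.odd_iff] at hn
      omega

theorem wt2_qqr_of_even {S : Finset (ZMod p)} (hS : Even #S) :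
    (wt2 (qqr p S) : ℤ) = p - charSum p S := by
  simp only [wt2, qqr, wt_eq_sum_val, Nat.cast_add, Nat.cast_sum, ← sum_add_distrib,
    val_conv_Nset_add_val_conv_Qset hS, sum_sub_distrib, charSum]
  simp [ZMod.card]

theorem wt2_qqr_univ (hp4 : p % 4 = 3) : wt2 (qqr p univ) = 2 * p := by
  simpa [qqr_empty, wt2_zero] using wt2_qqr_add_wt2_qqr_compl hp4 (univ : Finset (ZMod p))

theorem Xcard_eq (hp : p ≠ 2) (S : Finset (ZMod p)) :
    (Xcard p S : ℤ) = p + charSum p S + if Even #S then 2 else 1 := by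
  have affine := natCard_sq_eq_card_add_sum_quadraticChar (by rwa [ZMod.ringChar_zmod_n])
    fun x : ZMod p => ∏ b ∈ S, (x - b)
  rw [Xcard, Nat.cast_add, affine, ZMod.card, charSum]
  split_ifs <;> rfl

end WeightFormulas

section MinimumDistance

variable {p : ℕ} [Fact p.Prime]

theorem exists_two_mul_le_Xcard_add_wt2_qqr (hp4 : p % 4 = 3) {D : Finset (ZMod p)}
    (hD : D.Nonempty) :
    ∃ S : Finset (ZMod p), S.Nonempty ∧ 2 * (p : ℤ) ≤ Xcard p S + wt2 (qqr p D) := by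
  have hp : p ≠ 2 := by omega
  rcases Nat.even_or_odd #D with hDe | hDo
  · refine ⟨D, hD, ?_⟩
    rw [Xcard_eq hp, if_pos hDe, wt2_qqr_of_even hDe]
    linarith
  by_cases hDu : D = univ
  · refine ⟨D, hD, ?_⟩
    rw [hDu, wt2_qqr_univ hp4]
    push_cast
    linarith [(Xcard p univ).cast_nonneg (α := ℤ)]
  obtain ⟨t, ht⟩ : Dᶜ.Nonempty := (compl_ne_univ_iff_nonempty Dᶜ).mp (by rwa [compl_compl])
  have hEe : Even #Dᶜ := by
    have hle := card_le_univ D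
    rw [Nat.odd_iff] at hDo
    rw [ZMod.card] at hle
    rw [card_compl, ZMod.card, Nat.even_iff]
    omega
  have hSo : #(inversionRoots Dᶜ t) % 2 = 1 := by
    have hpos := card_pos.mpr ⟨t, ht⟩
    rw [Nat.even_iff] at hEe
    rw [card_inversionRoots ht]
    omega
  refine ⟨inversionRoots Dᶜ t, card_pos.mp (by omega), ?_⟩
  have hsum :=
    sum_quadraticChar_prod_add_sum_inversionRoots (quadraticChar_zmod_neg_one hp4) hEe ht
  have hcompl := wt2_qqr_add_wt2_qqr_compl hp4 Dᶜ
  rw [compl_compl] at hcompl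
  have hE := wt2_qqr_of_even hEe
  rw [Xcard_eq hp, if_neg (Nat.not_even_iff.mpr hSo)]
  unfold charSum at *
  omega

end MinimumDistance

/-- For `p ≡ 3 (mod 4)` the LQR code is a constant-weight code of weight `2p`
(apart from the zero word), and its minimum distance is at least
`d_p = 4p - 2·max_{∅ ≠ S ⊆ GF(p)} |X_S(GF(p))|`. -/
theorem lqr_constant_weight_and_min_dist (p : ℕ) [Fact p.Prime] (hp4 : p % 4 = 3) :
    (∀ S : Finset (ZMod p), S.Nonempty → S ≠ Finset.univ → wt4 (lqr p S) = 2 * p) ∧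
    (∀ S₁ S₂ : Finset (ZMod p), lqr p S₁ ≠ lqr p S₂ →
      4 * (p : ℤ) -
          2 * ((sSup {m : ℕ | ∃ S : Finset (ZMod p), S.Nonempty ∧ Xcard p S = m} : ℕ) : ℤ) ≤
        (wt4 (lqr p S₁ - lqr p S₂) : ℤ)) := by
  refine ⟨fun S _ _ => wt2_qqr_add_wt2_qqr_compl hp4 S, fun S₁ S₂ hne => ?_⟩
  have hD : (S₁ ∆ S₂).Nonempty := symmDiff_nonempty.mpr fun h => hne (h ▸ rfl)
  obtain ⟨S, hS, hle⟩ := exists_two_mul_le_Xcard_add_wt2_qqr hp4 hD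
  have hM := Nat.cast_le (α := ℤ) |>.mpr (Xcard_le_sSup hS)
  rw [lqr_sub, wt4]
  push_cast
  linarith
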